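/- arXiv:2603.21842 — 5 statements merged into one kernel-verified Lean document; each statement's English description precedes it below -/
import Mathlib

section
/- Let (Ω, mΩ, μ) be a probability space, let 𝒮, 𝒵, 𝒢 be sub-σ-algebras of mΩ with 𝒢 ≤ 𝒮 ⊔ 𝒵, and let v : Ω → ℝ be integrable. Assume that the σ-algebra 𝒮 ⊔ σ(v) generated by 𝒮 together with v is independent of 𝒵 under μ, and that the conditional expectation E[v | 𝒮] is (a.e. equal to) a 𝒢-measurable function. Then E[v | 𝒮] = E[v | 𝒢] μ-almost everywhere. -/
/-!
Conditioning on `𝒮 ⊔ 𝒵` instead of `𝒮` does not change the conditional expectation of `v`: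
on a generating π-system of sets `A ∩ B`, `A ∈ 𝒮`, `B ∈ 𝒵`, independence factorizes both
`∫_{A ∩ B} E[v | 𝒮]` and `∫_{A ∩ B} v` as `μ B` times the integral over `A`, where they agree.
Hence `E[v | 𝒢] = E[E[v | 𝒮 ⊔ 𝒵] | 𝒢] = E[E[v | 𝒮] | 𝒢]` by the tower property, and this is
`E[v | 𝒮]` because `E[v | 𝒮]` is `𝒢`-measurable.
-/

open MeasureTheory ProbabilityTheory MeasurableSpace

theorem MeasurableSpace.isPiSystem_image2_inter_measurableSet {Ω : Type*}
    (m₁ m₂ : MeasurableSpace Ω) :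
    IsPiSystem (Set.image2 (· ∩ ·) {s | MeasurableSet[m₁] s} {t | MeasurableSet[m₂] t}) := by
  rintro _ ⟨s₁, hs₁, t₁, ht₁, rfl⟩ _ ⟨s₂, hs₂, t₂, ht₂, rfl⟩ -
  exact ⟨s₁ ∩ s₂, hs₁.inter hs₂, t₁ ∩ t₂, ht₁.inter ht₂, Set.inter_inter_inter_comm _ _ _ _⟩

theorem MeasurableSpace.sup_eq_generateFrom_image2_inter {Ω : Type*}
    (m₁ m₂ : MeasurableSpace Ω) :
    m₁ ⊔ m₂ =
      generateFrom (Set.image2 (· ∩ ·) {s | MeasurableSet[m₁] s} {t | MeasurableSet[m₂] t}) := by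
  refine le_antisymm (sup_le (fun s hs ↦ ?_) (fun t ht ↦ ?_)) (generateFrom_le ?_)
  · exact measurableSet_generateFrom ⟨s, hs, Set.univ, MeasurableSet.univ, Set.inter_univ s⟩
  · exact measurableSet_generateFrom ⟨Set.univ, MeasurableSet.univ, t, ht, Set.univ_inter t⟩
  · rintro _ ⟨s, hs, t, ht, rfl⟩
    exact (le_sup_left (b := m₂) s hs).inter (le_sup_right (a := m₁) t ht)

namespace MeasureTheory

variable {Ω E : Type*} [NormedAddCommGroup E] [NormedSpace ℝ E] {m₀ : MeasurableSpace Ω}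
  {μ : Measure Ω}

theorem setIntegral_eq_setIntegral_of_isPiSystem {m : MeasurableSpace Ω} {C : Set (Set Ω)}
    (hm : m ≤ m₀) (h_eq : m = generateFrom C) (h_pi : IsPiSystem C) {f g : Ω → E}
    (hf : Integrable f μ) (hg : Integrable g μ)
    (basic : ∀ t ∈ C, ∫ x in t, f x ∂μ = ∫ x in t, g x ∂μ)
    (h_univ : ∫ x, f x ∂μ = ∫ x, g x ∂μ) {t : Set Ω} (ht : MeasurableSet[m] t) :
    ∫ x in t, f x ∂μ = ∫ x in t, g x ∂μ := by
  induction t, ht using induction_on_inter h_eq h_pi with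
  | empty => simp
  | basic t ht => exact basic t ht
  | compl t ht h_eq =>
    have ht₀ := hm t ht
    rw [← sub_eq_of_eq_add' (integral_add_compl ht₀ hf).symm,
      ← sub_eq_of_eq_add' (integral_add_compl ht₀ hg).symm, h_eq, h_univ]
  | iUnion t h_disj ht h_eq =>
    rw [integral_iUnion (fun i ↦ hm _ (ht i)) h_disj hf.integrableOn,
      integral_iUnion (fun i ↦ hm _ (ht i)) h_disj hg.integrableOn]
    exact tsum_congr h_eq

section Indep

variable [MeasurableSpace E] [BorelSpace E] [IsProbabilityMeasure μ] {m₁ m₂ : MeasurableSpace Ω}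
  {f : Ω → E}

theorem setIntegral_eq_measureReal_smul_integral_of_indep (hm₂ : m₂ ≤ m₀)
    (hind : Indep m₁ m₂ μ) (hf : StronglyMeasurable[m₁] f) (hfi : Integrable f μ) {s : Set Ω}
    (hs : MeasurableSet[m₂] s) :
    ∫ x in s, f x ∂μ = μ.real s • ∫ x, f x ∂μ := by
  have hs₀ := hm₂ s hs
  have h_indep : IndepFun (s.indicator fun _ ↦ (1 : ℝ)) f μ := by
    rw [IndepFun_iff_Indep]
    exact indep_of_indep_of_le_left (indep_of_indep_of_le_right hind.symm hf.measurable.comap_le)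
      (measurable_const.indicator hs).comap_le
  have h := h_indep.integral_fun_smul_eq_smul_integral
    ((integrable_const 1).indicator hs₀).aestronglyMeasurable hfi.aestronglyMeasurable
  simp only [← Set.indicator_smul_apply_left, one_smul] at h
  rwa [integral_indicator hs₀, integral_indicator_const _ hs₀, smul_eq_mul, mul_one] at h

/-- `m₃` plays the role of `m₁ ⊔ σ(f)`. -/
theorem condExp_sup_eq_of_indep [CompleteSpace E] {m₃ : MeasurableSpace Ω} (hm₁ : m₁ ≤ m₀)
    (hm₂ : m₂ ≤ m₀) (h₁₃ : m₁ ≤ m₃) (hf : StronglyMeasurable[m₃] f) (hind : Indep m₃ m₂ μ) :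
    μ[f | m₁ ⊔ m₂] =ᵐ[μ] μ[f | m₁] := by
  by_cases hfi : Integrable f μ
  swap; · simp [condExp_of_not_integrable hfi]
  refine (ae_eq_condExp_of_forall_setIntegral_eq (sup_le hm₁ hm₂) hfi
    (fun _ _ _ ↦ integrable_condExp.integrableOn) (fun s hs _ ↦ ?_)
    (stronglyMeasurable_condExp.mono (le_sup_left : m₁ ≤ m₁ ⊔ m₂)).aestronglyMeasurable).symm
  refine setIntegral_eq_setIntegral_of_isPiSystem (sup_le hm₁ hm₂)
    (sup_eq_generateFrom_image2_inter m₁ m₂) (isPiSystem_image2_inter_measurableSet m₁ m₂)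
    integrable_condExp hfi ?_ (integral_condExp hm₁) hs
  rintro _ ⟨a, ha, b, hb, rfl⟩
  have ha₀ := hm₁ a ha
  calc ∫ x in a ∩ b, μ[f | m₁] x ∂μ = ∫ x in b, a.indicator (μ[f | m₁]) x ∂μ := by
        rw [setIntegral_indicator ha₀, Set.inter_comm]
    _ = μ.real b • ∫ x in a, μ[f | m₁] x ∂μ := by
        rw [setIntegral_eq_measureReal_smul_integral_of_indep hm₂ hind
          ((stronglyMeasurable_condExp.mono h₁₃).indicator (h₁₃ a ha))
          (integrable_condExp.indicator ha₀) hb, integral_indicator ha₀]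
    _ = μ.real b • ∫ x in a, f x ∂μ := by rw [setIntegral_condExp hm₁ hfi ha]
    _ = ∫ x in a ∩ b, f x ∂μ := by
        rw [← integral_indicator ha₀, ← setIntegral_eq_measureReal_smul_integral_of_indep hm₂ hind
          (hf.indicator (h₁₃ a ha)) (hfi.indicator ha₀) hb, setIntegral_indicator ha₀,
          Set.inter_comm]

end Indep

end MeasureTheory

theorem stmt0_general {Ω : Type*} {mΩ : MeasurableSpace Ω} {μ : Measure Ω} [IsProbabilityMeasure μ]
    (𝒮 𝒵 𝒢 : MeasurableSpace Ω) (hS : 𝒮 ≤ mΩ) (hZ : 𝒵 ≤ mΩ) (hG : 𝒢 ≤ mΩ)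
    (hGSZ : 𝒢 ≤ 𝒮 ⊔ 𝒵)
    (v : Ω → ℝ)
    (hindep : Indep (𝒮 ⊔ MeasurableSpace.comap v (borel ℝ)) 𝒵 μ)
    (hmeas : AEStronglyMeasurable[𝒢] (μ[v | 𝒮]) μ) :
    μ[v | 𝒮] =ᵐ[μ] μ[v | 𝒢] := by
  have hv : StronglyMeasurable[𝒮 ⊔ MeasurableSpace.comap v (borel ℝ)] v :=
    (Measurable.of_comap_le (le_sup_right (a := 𝒮))).stronglyMeasurable
  calc μ[v | 𝒮] =ᵐ[μ] μ[μ[v | 𝒮] | 𝒢] :=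
        (condExp_of_aestronglyMeasurable' hG hmeas integrable_condExp).symm
    _ =ᵐ[μ] μ[μ[v | 𝒮 ⊔ 𝒵] | 𝒢] :=
        condExp_congr_ae (condExp_sup_eq_of_indep hS hZ le_sup_left hv hindep).symm
    _ =ᵐ[μ] μ[v | 𝒢] := condExp_condExp_of_le hGSZ (sup_le hS hZ)

theorem stmt0 {Ω : Type*} {mΩ : MeasurableSpace Ω} {μ : Measure Ω} [IsProbabilityMeasure μ]
    (𝒮 𝒵 𝒢 : MeasurableSpace Ω) (hS : 𝒮 ≤ mΩ) (hZ : 𝒵 ≤ mΩ) (hG : 𝒢 ≤ mΩ)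
    (hGSZ : 𝒢 ≤ 𝒮 ⊔ 𝒵)
    (v : Ω → ℝ) (hv : Integrable v μ)
    (hindep : Indep (𝒮 ⊔ MeasurableSpace.comap v (borel ℝ)) 𝒵 μ)
    (hmeas : AEStronglyMeasurable[𝒢] (μ[v | 𝒮]) μ) :
    μ[v | 𝒮] =ᵐ[μ] μ[v | 𝒢] :=
  stmt0_general 𝒮 𝒵 𝒢 hS hZ hG hGSZ v hindep hmeas
end

section
/- For r > 0, let ξ*(r) denote the unique ξ ∈ (0,1) satisfying 1 − ξ = r·√ξ, and define the optimal precision P(r) = ξ*(r)/(1 − ξ*(r)). Then P is strictly decreasing on (0,∞): if 0 < r₁ < r₂ then P(r₂) < P(r₁). -/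
/-- The optimal precision `P(r) = ξ*(r)/(1 − ξ*(r))`, where `ξ*(r) ∈ (0,1)`
solves `1 − ξ = r√ξ`, is strictly decreasing in `r`. -/
theorem stmt4 (r₁ r₂ ξ₁ ξ₂ : ℝ) (hr₁ : 0 < r₁) (hr : r₁ < r₂)
    (hξ₁ : ξ₁ ∈ Set.Ioo (0 : ℝ) 1) (h₁ : 1 - ξ₁ = r₁ * Real.sqrt ξ₁)
    (hξ₂ : ξ₂ ∈ Set.Ioo (0 : ℝ) 1) (h₂ : 1 - ξ₂ = r₂ * Real.sqrt ξ₂) :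
    ξ₂ / (1 - ξ₂) < ξ₁ / (1 - ξ₁) := by
  obtain ⟨h01, h11⟩ := hξ₁
  obtain ⟨h02, h12⟩ := hξ₂
  have s1 : 0 < Real.sqrt ξ₁ := Real.sqrt_pos.mpr h01
  have s2 : 0 < Real.sqrt ξ₂ := Real.sqrt_pos.mpr h02
  have hlt : ξ₂ < ξ₁ := by
    by_contra h
    push_neg at h
    have hs : Real.sqrt ξ₁ ≤ Real.sqrt ξ₂ := Real.sqrt_le_sqrt h
    have : r₂ * Real.sqrt ξ₂ < r₂ * Real.sqrt ξ₂ := by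
      calc r₂ * Real.sqrt ξ₂ = 1 - ξ₂ := h₂.symm
        _ ≤ 1 - ξ₁ := by linarith
        _ = r₁ * Real.sqrt ξ₁ := h₁
        _ ≤ r₁ * Real.sqrt ξ₂ := by nlinarith
        _ < r₂ * Real.sqrt ξ₂ := by nlinarith
    exact lt_irrefl _ this
  have e1 : ξ₁ / (1 - ξ₁) = Real.sqrt ξ₁ / r₁ := by
    rw [h₁]
    rw [div_eq_div_iff (by positivity) hr₁.ne']
    nlinarith [Real.sq_sqrt h01.le]
  have e2 : ξ₂ / (1 - ξ₂) = Real.sqrt ξ₂ / r₂ := by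
    rw [h₂]
    rw [div_eq_div_iff (mul_pos (hr₁.trans hr) s2).ne' (hr₁.trans hr).ne']
    nlinarith [Real.sq_sqrt h02.le]
  rw [e1, e2]
  have hs : Real.sqrt ξ₂ < Real.sqrt ξ₁ := (Real.sqrt_lt_sqrt h02.le hlt)
  rw [div_lt_div_iff₀ (hr₁.trans hr) hr₁]; nlinarith
end

section
/- Let σ > 0, λ > 0, μ₁, μ₂ ∈ ℝ, and v₁ < v₂ be real numbers. Let γ be the Gaussian measure on ℝ with mean 0 and variance σ², and define g : ℝ → ℝ by g(z) = (v₁·e^{(v₁ z + μ₁)/λ} + v₂·e^{(v₂ z + μ₂)/λ}) / (e^{(v₁ z + μ₁)/λ} + e^{(v₂ z + μ₂)/λ}). Then for every v with v₁ < v < v₂, γ({z : g(z) ≤ v}) = Φ( (λ/(σ(v₁ − v₂)))·log((v₂ − v)/(v − v₁)) − (μ₁ − μ₂)/(σ(v₁ − v₂)) ), where Φ is the cumulative distribution function of the standard Gaussian measure on ℝ (mean 0, variance 1). -/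
open MeasureTheory ProbabilityTheory

/-!
The posterior mean `g z` is a weighted average of `v₁ < v₂` whose weight on `v₂` has log-odds
affine and increasing in `z`. Hence `g z ≤ v` says that this log-odds is at most
`log ((v - v₁) / (v₂ - v))`, i.e. that `z` lies below an explicit threshold `σ t`, and the Gaussian
measure of `Iic (σ t)` under `N(0, σ²)` is `Φ t`.
-/

lemma logit_average_le_iff {v₁ v₂ v : ℝ} (hv₁ : v₁ < v) (hv₂ : v < v₂) (x y : ℝ) :
    (v₁ * Real.exp x + v₂ * Real.exp y) / (Real.exp x + Real.exp y) ≤ v ↔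
      y - x ≤ Real.log ((v - v₁) / (v₂ - v)) := by
  have hex := Real.exp_pos x
  have hey := Real.exp_pos y
  rw [div_le_iff₀ (by positivity), Real.le_log_iff_exp_le (div_pos (by linarith) (by linarith)),
    Real.exp_sub, div_le_div_iff₀ hex (by linarith)]
  constructor <;> intro h <;> nlinarith

lemma setOf_logit_average_le_eq_Iic {lam μ₁ μ₂ v₁ v₂ v : ℝ} (hlam : 0 < lam)
    (hv₁ : v₁ < v) (hv₂ : v < v₂) :
    {z : ℝ | (v₁ * Real.exp ((v₁ * z + μ₁) / lam) + v₂ * Real.exp ((v₂ * z + μ₂) / lam)) /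
        (Real.exp ((v₁ * z + μ₁) / lam) + Real.exp ((v₂ * z + μ₂) / lam)) ≤ v} =
      Set.Iic ((lam * Real.log ((v - v₁) / (v₂ - v)) - (μ₂ - μ₁)) / (v₂ - v₁)) := by
  ext z
  rw [Set.mem_ofPred_eq, logit_average_le_iff hv₁ hv₂, Set.mem_Iic,
    le_div_iff₀ (by linarith), ← div_sub_div_same, ← sub_div, div_le_iff₀ hlam]
  constructor <;> intro h <;> linarith

lemma gaussianReal_Iic_const_mul {σ : ℝ} (hσ : 0 < σ) (t : ℝ) :
    gaussianReal 0 ⟨σ ^ 2, sq_nonneg σ⟩ (Set.Iic (σ * t)) = gaussianReal 0 1 (Set.Iic t) := by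
  have hmap : gaussianReal 0 ⟨σ ^ 2, sq_nonneg σ⟩ = (gaussianReal 0 1).map (σ * ·) := by
    rw [gaussianReal_map_const_mul, mul_zero, mul_one]
    rfl
  rw [hmap, Measure.map_apply (measurable_const_mul σ) measurableSet_Iic]
  congr 1
  ext x
  exact mul_le_mul_iff_right₀ hσ

theorem stmt9_general (σ lam μ₁ μ₂ v₁ v₂ : ℝ) (hσ : 0 < σ) (hlam : 0 < lam)
    (v : ℝ) (hv₁ : v₁ < v) (hv₂ : v < v₂) :
    ((gaussianReal 0 ⟨σ ^ 2, sq_nonneg σ⟩)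
        {z : ℝ |
          (v₁ * Real.exp ((v₁ * z + μ₁) / lam) + v₂ * Real.exp ((v₂ * z + μ₂) / lam)) /
              (Real.exp ((v₁ * z + μ₁) / lam) + Real.exp ((v₂ * z + μ₂) / lam)) ≤ v}).toReal
      = ((gaussianReal 0 1)
          (Set.Iic (lam / (σ * (v₁ - v₂)) * Real.log ((v₂ - v) / (v - v₁))
            - (μ₁ - μ₂) / (σ * (v₁ - v₂))))).toReal := by
  have hthreshold : (lam * Real.log ((v - v₁) / (v₂ - v)) - (μ₂ - μ₁)) / (v₂ - v₁) =
      σ * (lam / (σ * (v₁ - v₂)) * Real.log ((v₂ - v) / (v - v₁))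
        - (μ₁ - μ₂) / (σ * (v₁ - v₂))) := by
    rw [← inv_div (v - v₁), Real.log_inv]
    have : v₁ - v₂ ≠ 0 := by linarith
    have : v₂ - v₁ ≠ 0 := by linarith
    field_simp
    ring
  rw [setOf_logit_average_le_eq_Iic hlam hv₁ hv₂, hthreshold, gaussianReal_Iic_const_mul hσ]

/-- CDF of the conditional expected payoff in the two-state case: with a
Gaussian signal `z ~ N(0, σ²)` and logit posterior, for `v₁ < v < v₂`,
`γ({z : g z ≤ v}) = Φ((λ/(σ(v₁−v₂)))·log((v₂−v)/(v−v₁)) − (μ₁−μ₂)/(σ(v₁−v₂)))`,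
where `Φ` is the standard Gaussian CDF. -/
theorem stmt9 (σ lam μ₁ μ₂ v₁ v₂ : ℝ) (hσ : 0 < σ) (hlam : 0 < lam)
    (hv : v₁ < v₂) (v : ℝ) (hv₁ : v₁ < v) (hv₂ : v < v₂) :
    ((gaussianReal 0 ⟨σ ^ 2, sq_nonneg σ⟩)
        {z : ℝ |
          (v₁ * Real.exp ((v₁ * z + μ₁) / lam) + v₂ * Real.exp ((v₂ * z + μ₂) / lam)) /
              (Real.exp ((v₁ * z + μ₁) / lam) + Real.exp ((v₂ * z + μ₂) / lam)) ≤ v}).toReal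
      = ((gaussianReal 0 1)
          (Set.Iic (lam / (σ * (v₁ - v₂)) * Real.log ((v₂ - v) / (v - v₁))
            - (μ₁ - μ₂) / (σ * (v₁ - v₂))))).toReal :=
  stmt9_general σ lam μ₁ μ₂ v₁ v₂ hσ hlam v hv₁ hv₂
end

section
/- Let σ > 0, λ > 0, μ₁, μ₂ ∈ ℝ, and v₁ < v₂ be real numbers. Let γ be the Gaussian measure on ℝ with mean 0 and variance σ², let g(z) = (v₁·e^{(v₁ z + μ₁)/λ} + v₂·e^{(v₂ z + μ₂)/λ}) / (e^{(v₁ z + μ₁)/λ} + e^{(v₂ z + μ₂)/λ}), and let F(v) = γ({z : g(z) ≤ v}). Then for every v with v₁ < v < v₂, F is differentiable at v with derivative F'(v) = (λ/(σ·(v₂ − v)·(v − v₁)))·φ( (λ/(σ(v₁ − v₂)))·log((v₂ − v)/(v − v₁)) − (μ₁ − μ₂)/(σ(v₁ − v₂)) ), where φ(x) = (1/√(2π))·e^{−x²/2} is the standard Gaussian density. -/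
/-!
The posterior mean `g z` is a logistic function of the signal `z`, strictly increasing from `v₁`
to `v₂`, with explicit inverse `h w = (λ log ((w - v₁) / (v₂ - w)) + μ₁ - μ₂) / (v₂ - v₁)`.
Hence `{z | g z ≤ w} = Iic (h w)` for `v₁ < w < v₂`, so `F = Φ_σ ∘ h` near `v` and the chain
rule gives `F' v = φ_σ (h v) · h' v` with `h' v = λ / ((v₂ - v) (v - v₁))`.
-/

open MeasureTheory ProbabilityTheory Set Real
open scoped NNReal Topology

theorem hasDerivAt_integral_Iic {f : ℝ → ℝ} {x : ℝ} (hf : Integrable f) (hx : ContinuousAt f x) :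
    HasDerivAt (fun y => ∫ t in Iic y, f t) (f x) x := by
  have hsplit : (fun y => ∫ t in Iic y, f t) = fun y => (∫ t in Iic x, f t) + ∫ t in x..y, f t := by
    funext y
    rw [← intervalIntegral.integral_Iic_sub_Iic hf.integrableOn hf.integrableOn]
    ring
  rw [hsplit]
  exact (intervalIntegral.integral_hasDerivAt_right hf.intervalIntegrable
    hf.aestronglyMeasurable.stronglyMeasurableAtFilter hx).const_add _

theorem hasDerivAt_gaussianReal_Iic (μ : ℝ) {v : ℝ≥0} (hv : v ≠ 0) (x : ℝ) :
    HasDerivAt (fun y => (gaussianReal μ v (Iic y)).toReal) (gaussianPDFReal μ v x) x := by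
  have hcdf : (fun y => (gaussianReal μ v (Iic y)).toReal) =
      fun y => ∫ t in Iic y, gaussianPDFReal μ v t := by
    funext y
    rw [gaussianReal_apply_eq_integral _ hv,
      ENNReal.toReal_ofReal (integral_nonneg (gaussianPDFReal_nonneg _ _))]
  rw [hcdf]
  exact hasDerivAt_integral_Iic (integrable_gaussianPDFReal μ v)
    (by rw [gaussianPDFReal_def]; fun_prop)

theorem gaussianPDFReal_zero_of_coe_eq_sq {σ : ℝ} {v : ℝ≥0} (hσ : 0 < σ) (hv : (v : ℝ) = σ ^ 2)
    (x : ℝ) : gaussianPDFReal 0 v x = σ⁻¹ * (1 / √(2 * π) * exp (-(x / σ) ^ 2 / 2)) := by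
  rw [gaussianPDFReal, hv, sub_zero, sqrt_mul (by positivity), sqrt_sq hσ.le]
  field_simp

theorem weightedMean_le_iff {v₁ v₂ w p q : ℝ} (hpq : 0 < p + q) :
    (v₁ * p + v₂ * q) / (p + q) ≤ w ↔ (v₂ - w) * q ≤ (w - v₁) * p := by
  rw [div_le_iff₀ hpq]
  constructor <;> intro h <;> linarith

theorem mul_exp_le_mul_exp_iff {a b c d : ℝ} (hc : 0 < c) (hd : 0 < d) :
    c * exp b ≤ d * exp a ↔ b - a ≤ log (d / c) := by
  rw [le_log_iff_exp_le (div_pos hd hc), exp_sub, div_le_div_iff₀ (exp_pos a) hc, mul_comm c]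

noncomputable def posteriorMean (lam μ₁ μ₂ v₁ v₂ z : ℝ) : ℝ :=
  (v₁ * exp ((v₁ * z + μ₁) / lam) + v₂ * exp ((v₂ * z + μ₂) / lam)) /
    (exp ((v₁ * z + μ₁) / lam) + exp ((v₂ * z + μ₂) / lam))

noncomputable def posteriorMeanInv (lam μ₁ μ₂ v₁ v₂ w : ℝ) : ℝ :=
  (lam * log ((w - v₁) / (v₂ - w)) + μ₁ - μ₂) / (v₂ - v₁)

theorem posteriorMean_le_iff {lam μ₁ μ₂ v₁ v₂ w : ℝ} (hlam : 0 < lam) (hw₁ : v₁ < w)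
    (hw₂ : w < v₂) (z : ℝ) :
    posteriorMean lam μ₁ μ₂ v₁ v₂ z ≤ w ↔ z ≤ posteriorMeanInv lam μ₁ μ₂ v₁ v₂ w := by
  rw [posteriorMean, weightedMean_le_iff (by positivity),
    mul_exp_le_mul_exp_iff (sub_pos.2 hw₂) (sub_pos.2 hw₁), posteriorMeanInv,
    le_div_iff₀ (by linarith), div_sub_div_same, div_le_iff₀ hlam]
  constructor <;> intro h <;> linarith

theorem hasDerivAt_posteriorMeanInv (lam μ₁ μ₂ : ℝ) {v₁ v₂ v : ℝ} (hv₁ : v₁ < v) (hv₂ : v < v₂) :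
    HasDerivAt (posteriorMeanInv lam μ₁ μ₂ v₁ v₂) (lam / ((v₂ - v) * (v - v₁))) v := by
  have hq := ((hasDerivAt_id' v).sub_const v₁).fun_div ((hasDerivAt_id' v).const_sub v₂)
    (sub_ne_zero.2 hv₂.ne')
  have hpos : 0 < (v - v₁) / (v₂ - v) := div_pos (sub_pos.2 hv₁) (sub_pos.2 hv₂)
  refine ((((hq.log hpos.ne').const_mul lam).add_const μ₁).sub_const μ₂).div_const (v₂ - v₁)
    |>.congr_deriv ?_
  have : v₂ - v₁ ≠ 0 := by linarith
  have : v - v₁ ≠ 0 := by linarith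
  have : v₂ - v ≠ 0 := by linarith
  field_simp
  ring

theorem posteriorMeanInv_eq {lam μ₁ μ₂ v₁ v₂ w : ℝ} (hv : v₁ ≠ v₂) :
    posteriorMeanInv lam μ₁ μ₂ v₁ v₂ w =
      (lam * log ((v₂ - w) / (w - v₁)) - (μ₁ - μ₂)) / (v₁ - v₂) := by
  rw [posteriorMeanInv, ← inv_div (w - v₁), log_inv]
  have : v₁ - v₂ ≠ 0 := sub_ne_zero.2 hv
  have : v₂ - v₁ ≠ 0 := sub_ne_zero.2 hv.symm
  field_simp
  ring

/-- Density of the conditional expected payoff in the two-state case: the CDF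
`F(v) = γ({z : g z ≤ v})` of the conditional expected payoff is differentiable
on `(v₁, v₂)` with derivative
`(λ/(σ(v₂−v)(v−v₁)))·φ((λ/(σ(v₁−v₂)))·log((v₂−v)/(v−v₁)) − (μ₁−μ₂)/(σ(v₁−v₂)))`,
where `φ` is the standard Gaussian density. -/
theorem stmt10 (σ lam μ₁ μ₂ v₁ v₂ : ℝ) (hσ : 0 < σ) (hlam : 0 < lam)
    (hv : v₁ < v₂) (v : ℝ) (hv₁ : v₁ < v) (hv₂ : v < v₂) :
    HasDerivAt
      (fun w : ℝ => ((gaussianReal 0 ⟨σ ^ 2, sq_nonneg σ⟩)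
        {z : ℝ |
          (v₁ * Real.exp ((v₁ * z + μ₁) / lam) + v₂ * Real.exp ((v₂ * z + μ₂) / lam)) /
              (Real.exp ((v₁ * z + μ₁) / lam) + Real.exp ((v₂ * z + μ₂) / lam)) ≤ w}).toReal)
      (lam / (σ * (v₂ - v) * (v - v₁)) *
        (1 / Real.sqrt (2 * Real.pi) *
          Real.exp (-(lam / (σ * (v₁ - v₂)) * Real.log ((v₂ - v) / (v - v₁))
              - (μ₁ - μ₂) / (σ * (v₁ - v₂))) ^ 2 / 2)))
      v := by
  have hV : (⟨σ ^ 2, sq_nonneg σ⟩ : ℝ≥0) ≠ 0 := fun h =>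
    pow_ne_zero 2 hσ.ne' (congrArg NNReal.toReal h)
  have hcdf : (fun w => (gaussianReal 0 ⟨σ ^ 2, sq_nonneg σ⟩
        {z | posteriorMean lam μ₁ μ₂ v₁ v₂ z ≤ w}).toReal) =ᶠ[𝓝 v]
      (fun y => (gaussianReal 0 ⟨σ ^ 2, sq_nonneg σ⟩ (Iic y)).toReal) ∘
        posteriorMeanInv lam μ₁ μ₂ v₁ v₂ := by
    filter_upwards [Ioo_mem_nhds hv₁ hv₂] with w ⟨hw₁, hw₂⟩
    congr 2
    ext z
    exact posteriorMean_le_iff hlam hw₁ hw₂ z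
  refine (((hasDerivAt_gaussianReal_Iic 0 hV _).comp v
    (hasDerivAt_posteriorMeanInv lam μ₁ μ₂ hv₁ hv₂)).congr_of_eventuallyEq hcdf).congr_deriv ?_
  -- `⟨σ ^ 2, _⟩` elaborates at the type `{r // 0 ≤ r}`, so `rw` only matches it when spelled out.
  rw [gaussianPDFReal_zero_of_coe_eq_sq (v := ⟨σ ^ 2, sq_nonneg σ⟩) hσ rfl,
    posteriorMeanInv_eq hv.ne]
  field_simp
end

section
/- Let ν be a probability measure on a measurable space and let f, g be real-valued functions that are square-integrable with respect to ν. Write m_f = ∫ f dν, m_g = ∫ g dν, s_f = √(∫ (f − m_f)² dν), and s_g = √(∫ (g − m_g)² dν). Then ∫ (f − g)² dν ≥ (m_f − m_g)² + (s_f − s_g)². -/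
/-!
Subtracting the means splits `∫ (f - g)²` into `(m_f - m_g)²` plus the squared `L²` norm of the
difference of the centred functions, since the cross term has mean zero. By the reverse triangle
inequality in `L²`, that norm is at least `|‖f - m_f‖ - ‖g - m_g‖| = |s_f - s_g|`.
-/

open MeasureTheory ProbabilityTheory

section

variable {α : Type*} [MeasurableSpace α] {μ : Measure α}

lemma MeasureTheory.MemLp.norm_toLp_sq_eq_integral_sq {F : α → ℝ} (hF : MemLp F 2 μ) :
    ‖hF.toLp F‖ ^ 2 = ∫ x, F x ^ 2 ∂μ := by
  rw [← real_inner_self_eq_norm_sq, L2.inner_def]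
  refine integral_congr_ae ?_
  filter_upwards [hF.coeFn_toLp] with x hx
  simp [hx, sq]

lemma MeasureTheory.MemLp.sqrt_integral_sq_eq_norm_toLp {F : α → ℝ} (hF : MemLp F 2 μ) :
    √(∫ x, F x ^ 2 ∂μ) = ‖hF.toLp F‖ := by
  rw [← hF.norm_toLp_sq_eq_integral_sq, Real.sqrt_sq (norm_nonneg _)]

lemma sq_sub_sqrt_integral_sq_le_integral_sub_sq {F G : α → ℝ} (hF : MemLp F 2 μ)
    (hG : MemLp G 2 μ) :
    (√(∫ x, F x ^ 2 ∂μ) - √(∫ x, G x ^ 2 ∂μ)) ^ 2 ≤ ∫ x, (F x - G x) ^ 2 ∂μ := by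
  rw [hF.sqrt_integral_sq_eq_norm_toLp, hG.sqrt_integral_sq_eq_norm_toLp]
  calc (‖hF.toLp F‖ - ‖hG.toLp G‖) ^ 2 ≤ ‖hF.toLp F - hG.toLp G‖ ^ 2 := by
        rw [← sq_abs]
        exact pow_le_pow_left₀ (abs_nonneg _) (abs_norm_sub_norm_le _ _) 2
    _ = ∫ x, (F x - G x) ^ 2 ∂μ := by
        rw [← MemLp.toLp_sub]
        exact (hF.sub hG).norm_toLp_sq_eq_integral_sq

lemma integral_sub_sq_eq_sq_sub_integral_add_integral_sub_sq [IsProbabilityMeasure μ]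
    {f g : α → ℝ} (hf : MemLp f 2 μ) (hg : MemLp g 2 μ) :
    ∫ x, (f x - g x) ^ 2 ∂μ = ((∫ x, f x ∂μ) - ∫ x, g x ∂μ) ^ 2 +
      ∫ x, ((f x - ∫ y, f y ∂μ) - (g x - ∫ y, g y ∂μ)) ^ 2 ∂μ := by
  have h := variance_eq_sub (hf.sub hg)
  rw [variance_eq_integral (hf.sub hg).aestronglyMeasurable.aemeasurable] at h
  simp only [Pi.sub_apply, Pi.pow_apply,
    integral_sub (hf.integrable one_le_two) (hg.integrable one_le_two)] at h
  rw [eq_sub_iff_add_eq] at h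
  rw [← h, add_comm]
  congr 2
  funext x
  ring
end

/-- One-dimensional Gelbrich bound in L² form: for square-integrable `f, g` on
a probability space, `∫(f−g)² ≥ (m_f − m_g)² + (s_f − s_g)²`, where `m` are
means and `s` standard deviations. -/
theorem stmt16 {Ω : Type*} [MeasurableSpace Ω] (ν : Measure Ω) [IsProbabilityMeasure ν]
    (f g : Ω → ℝ) (hf : MemLp f 2 ν) (hg : MemLp g 2 ν) :
    ((∫ x, f x ∂ν) - ∫ x, g x ∂ν) ^ 2 +
        (Real.sqrt (∫ x, (f x - ∫ y, f y ∂ν) ^ 2 ∂ν) -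
          Real.sqrt (∫ x, (g x - ∫ y, g y ∂ν) ^ 2 ∂ν)) ^ 2
      ≤ ∫ x, (f x - g x) ^ 2 ∂ν := by
  have hf₀ : MemLp (fun x => f x - ∫ y, f y ∂ν) 2 ν := hf.sub (memLp_const _)
  have hg₀ : MemLp (fun x => g x - ∫ y, g y ∂ν) 2 ν := hg.sub (memLp_const _)
  rw [integral_sub_sq_eq_sq_sub_integral_add_integral_sub_sq hf hg]
  gcongr
  exact sq_sub_sqrt_integral_sq_le_integral_sub_sq hf₀ hg₀
end
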